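/- arXiv:1904.12030 — 16 statements merged into one kernel-verified Lean document; each statement's English description precedes it below -/
import Mathlib

section
/- Let G be a set with two binary operations ⊢ and ⊣. Define on G × G the operations (u,h) ⊩ (v,k) = (h⊢v, h⊢k), (u,h) ⫞ (v,k) = (u, h⊣k), and (u,h) ⊥ (v,k) = (h⊣v, h⊣k). If ⊣ is associative, then (G × G, ⊥, ⫞) is a right disemigroup (i.e., ⊥ and ⫞ are associative and satisfy x ⫞ (y ⫞ z) = x ⫞ (y ⊥ z) and (x ⊥ y) ⫞ z = x ⊥ (y ⫞ z)). -/
theorem prod_right_disemigroup {G : Type*} (l rr : G → G → G)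
    (r_assoc : ∀ x y z : G, rr (rr x y) z = rr x (rr y z)) :
    let P : G × G → G × G → G × G := fun p q => (rr p.2 q.1, rr p.2 q.2)
    let D : G × G → G × G → G × G := fun p q => (p.1, rr p.2 q.2)
    (∀ x y z : G × G, P (P x y) z = P x (P y z)) ∧
    (∀ x y z : G × G, D (D x y) z = D x (D y z)) ∧
    (∀ x y z : G × G, D x (D y z) = D x (P y z)) ∧
    (∀ x y z : G × G, D (P x y) z = P x (D y z)) := by
  intro P D
  refine ⟨?_, ?_, ?_, ?_⟩ <;> intro x y z <;> simp [P, D, r_assoc]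
end

section
/- Let (G, ⊢, ⊣) be a disemigroup. Define on G × G: (u,h) ⊩ (v,k) = (h⊢v, h⊢k) and (u,h) ⫞ (v,k) = (u, h⊣k). Then (G × G, ⊩, ⫞) is a disemigroup. -/
theorem prod_disemigroup {G : Type*} (l r : G → G → G)
    (l_assoc : ∀ x y z : G, l (l x y) z = l x (l y z))
    (r_assoc : ∀ x y z : G, r (r x y) z = r x (r y z))
    (hL1 : ∀ x y z : G, l x (l y z) = l (r x y) z)
    (hL2 : ∀ x y z : G, l x (r y z) = r (l x y) z)
    (hR1 : ∀ x y z : G, r x (r y z) = r x (l y z))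
    (hR2 : ∀ x y z : G, r (l x y) z = l x (r y z)) :
    let L : G × G → G × G → G × G := fun p q => (l p.2 q.1, l p.2 q.2)
    let D : G × G → G × G → G × G := fun p q => (p.1, r p.2 q.2)
    (∀ x y z : G × G, L (L x y) z = L x (L y z)) ∧
    (∀ x y z : G × G, D (D x y) z = D x (D y z)) ∧
    (∀ x y z : G × G, L x (L y z) = L (D x y) z) ∧
    (∀ x y z : G × G, L x (D y z) = D (L x y) z) ∧
    (∀ x y z : G × G, D x (D y z) = D x (L y z)) ∧
    (∀ x y z : G × G, D (L x y) z = L x (D y z)) := by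
  refine ⟨?_, ?_, ?_, ?_, ?_, ?_⟩ <;> intro x y z <;>
    simp [Prod.ext_iff, l_assoc, r_assoc, hL1, hL2, hR1]
end

section
/- Let M be a set, H a group acting on M on the left, and e ∈ M with h•e = e for all h ∈ H. On A = M × H define (u,h) ⊢ (v,k) = (h•v, hk), (u,h) ⊣ (v,k) = (u, hk), (u,h) ⊥ (v,k) = (e, hk). Then (A, ⊢, ⊥, ⊣) is a trigroup with bar-unit (e, 1), where the inverse of (u,h) is (e, h⁻¹). -/
structure Trigroup (A : Type*) where
  l : A → A → A
  m : A → A → A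
  r : A → A → A
  one : A
  inv : A → A
  l_assoc : ∀ x y z : A, l (l x y) z = l x (l y z)
  m_assoc : ∀ x y z : A, m (m x y) z = m x (m y z)
  r_assoc : ∀ x y z : A, r (r x y) z = r x (r y z)
  L1 : ∀ x y z : A, l x (l y z) = l (r x y) z
  L2 : ∀ x y z : A, l x (r y z) = r (l x y) z
  R1 : ∀ x y z : A, r x (r y z) = r x (l y z)
  R2 : ∀ x y z : A, r (l x y) z = l x (r y z)
  L1m : ∀ x y z : A, l x (l y z) = l (m x y) z
  L2m : ∀ x y z : A, l x (m y z) = m (l x y) z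
  R1m : ∀ x y z : A, r x (r y z) = r x (m y z)
  R2m : ∀ x y z : A, r (m x y) z = m x (r y z)
  T4 : ∀ x y z : A, m (r x y) z = m x (l y z)
  one_l : ∀ x : A, l one x = x
  r_one : ∀ x : A, r x one = x
  l_inv : ∀ x : A, l x (inv x) = one
  inv_r : ∀ x : A, r (inv x) x = one
  m_inv : ∀ x : A, m x (inv x) = one
  inv_m : ∀ x : A, m (inv x) x = one

theorem action_trigroup {M : Type*} {H : Type*} [Group H] [MulAction H M]
    (e : M) (he : ∀ h : H, h • e = e) :
    ∃ T : Trigroup (M × H),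
      T.l = (fun p q => (p.2 • q.1, p.2 * q.2)) ∧
      T.m = (fun p q => (e, p.2 * q.2)) ∧
      T.r = (fun p q => (p.1, p.2 * q.2)) ∧
      T.one = (e, 1) ∧
      T.inv = (fun p => (e, p.2⁻¹)) := by
  refine ⟨{
    l := fun p q => (p.2 • q.1, p.2 * q.2)
    m := fun p q => (e, p.2 * q.2)
    r := fun p q => (p.1, p.2 * q.2)
    one := (e, 1)
    inv := fun p => (e, p.2⁻¹)
    l_assoc := by intros; simp [mul_assoc, smul_smul]
    m_assoc := by intros; simp [mul_assoc]
    r_assoc := by intros; simp [mul_assoc]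
    L1 := by intros; simp [mul_assoc, smul_smul]
    L2 := by intros; simp [mul_assoc]
    R1 := by intros; simp [mul_assoc]
    R2 := by intros; simp [mul_assoc]
    L1m := by intros; simp [mul_assoc, smul_smul, he]
    L2m := by intros; simp [mul_assoc, he]
    R1m := by intros; simp [mul_assoc]
    R2m := by intros; simp [mul_assoc]
    T4 := by intros; simp [mul_assoc]
    one_l := by intros; simp
    r_one := by intros; simp
    l_inv := by intros; simp [he]
    inv_r := by intros; simp
    m_inv := by intros; simp
    inv_m := by intros; simp }, rfl, rfl, rfl, rfl, rfl⟩
end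

section
/- In a trigroup, for all x: x ⊢ 1 = 1 ⊥ x = x ⊥ 1 = 1 ⊣ x. -/
theorem trigroup_x_one {A : Type*} (T : Trigroup A) (x : A) :
    T.l x T.one = T.m T.one x ∧ T.m T.one x = T.m x T.one ∧
    T.m x T.one = T.r T.one x := by
  have h1 : T.l x T.one = T.r T.one x := by
    rw [← T.inv_r x, T.L2, T.l_inv, T.inv_r]
  have h2 : T.m T.one x = T.l x T.one := by
    rw [← T.l_inv x, ← T.L2m, T.l_inv, T.inv_m]
  have h3 : T.m x T.one = T.r T.one x := by
    rw [← T.inv_r x, ← T.R2m, T.m_inv, T.inv_r]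
  exact ⟨h2.symm, by rw [h2, h3, h1], h3⟩
end

section
/- In a trigroup, for all x: (x⁻¹)⁻¹ = x ⊢ 1. (Here (x⁻¹)⁻¹ denotes any element y with x⁻¹ ⊢ y = 1 = y ⊣ x⁻¹ and x⁻¹ ⊥ y = 1 = y ⊥ x⁻¹; the claim is that x ⊢ 1 satisfies these identities.) -/
lemma trigroup_m_one_one {A : Type*} (T : Trigroup A) : T.m T.one T.one = T.one := by
  calc T.m T.one T.one = T.m T.one (T.r (T.inv T.one) T.one) := by rw [T.inv_r]
    _ = T.r (T.m T.one (T.inv T.one)) T.one := by rw [T.R2m]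
    _ = T.r T.one T.one := by rw [T.m_inv]
    _ = T.one := T.r_one _

lemma trigroup_l_one_eq {A : Type*} (T : Trigroup A) (x : A) :
    T.l x T.one = T.r T.one x := by
  calc T.l x T.one = T.l x (T.r (T.inv x) x) := by rw [T.inv_r]
    _ = T.r (T.l x (T.inv x)) x := T.L2 _ _ _
    _ = T.r T.one x := by rw [T.l_inv]

theorem trigroup_inv_inv {A : Type*} (T : Trigroup A) (x : A) :
    T.l (T.inv x) (T.l x T.one) = T.one ∧
    T.r (T.l x T.one) (T.inv x) = T.one ∧
    T.m (T.inv x) (T.l x T.one) = T.one ∧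
    T.m (T.l x T.one) (T.inv x) = T.one := by
  refine ⟨?_, ?_, ?_, ?_⟩
  · rw [T.L1, T.inv_r, T.one_l]
  · have h1 : T.r T.one (T.inv x) = T.inv x := by
      calc T.r T.one (T.inv x) = T.r (T.r (T.inv x) x) (T.inv x) := by rw [T.inv_r]
        _ = T.r (T.inv x) (T.r x (T.inv x)) := T.r_assoc _ _ _
        _ = T.r (T.inv x) (T.l x (T.inv x)) := T.R1 _ _ _
        _ = T.r (T.inv x) T.one := by rw [T.l_inv]
        _ = T.inv x := T.r_one _
    rw [T.R2, h1, T.l_inv]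
  · calc T.m (T.inv x) (T.l x T.one) = T.m (T.r (T.inv x) x) T.one := (T.T4 _ _ _).symm
      _ = T.m T.one T.one := by rw [T.inv_r]
      _ = T.one := trigroup_m_one_one T
  · calc T.m (T.l x T.one) (T.inv x) = T.m (T.r T.one x) (T.inv x) := by
          rw [trigroup_l_one_eq]
      _ = T.m T.one (T.l x (T.inv x)) := T.T4 _ _ _
      _ = T.m T.one T.one := by rw [T.l_inv]
      _ = T.one := trigroup_m_one_one T
end

section
/- In a trigroup, for all x and y: (y⁻¹ ⊥ x⁻¹) is an inverse of (x ⊥ y), i.e., (x ⊥ y) ⊢ (y⁻¹ ⊥ x⁻¹) = 1, (y⁻¹ ⊥ x⁻¹) ⊣ (x ⊥ y) = 1, (x ⊥ y) ⊥ (y⁻¹ ⊥ x⁻¹) = 1, and (y⁻¹ ⊥ x⁻¹) ⊥ (x ⊥ y) = 1. -/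
theorem trigroup_inv_m {A : Type*} (T : Trigroup A) (x y : A) :
    T.l (T.m x y) (T.m (T.inv y) (T.inv x)) = T.one ∧
    T.r (T.m (T.inv y) (T.inv x)) (T.m x y) = T.one ∧
    T.m (T.m x y) (T.m (T.inv y) (T.inv x)) = T.one ∧
    T.m (T.m (T.inv y) (T.inv x)) (T.m x y) = T.one := by
  -- auxiliary facts
  have lz1 : ∀ z : A, T.l z T.one = T.m T.one z := fun z => by
    conv_lhs => rw [← T.inv_m z, T.L2m, T.l_inv]
  have m11 : T.m T.one T.one = T.one := by rw [← lz1, T.one_l]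
  have mcomm : ∀ z : A, T.m z T.one = T.m T.one z := fun z => by
    conv_lhs => rw [← T.inv_m z, ← T.m_assoc, T.m_inv]
  have key : ∀ z : A, T.m z (T.m T.one (T.inv z)) = T.one := fun z => by
    rw [← T.m_assoc, mcomm, T.m_assoc, T.m_inv, m11]
  refine ⟨?_, ?_, ?_, ?_⟩
  · rw [← T.L1m, T.L2m, T.l_inv, ← lz1, T.L1m, T.m_inv, T.one_l]
  · rw [← T.R1m, ← T.r_assoc, T.R2m, T.inv_r, mcomm, T.R2m, T.inv_r, m11]
  · rw [T.m_assoc, ← T.m_assoc y, T.m_inv, key]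
  · rw [T.m_assoc, ← T.m_assoc (T.inv x), T.inv_m, ← T.m_assoc, mcomm, T.m_assoc, T.inv_m, m11]
end

section
/- In a trigroup, for all x and y: y⁻¹ ⊢ x⁻¹ is an inverse of x ⊢ y, i.e., (x ⊢ y) ⊢ (y⁻¹ ⊢ x⁻¹) = 1, (y⁻¹ ⊢ x⁻¹) ⊣ (x ⊢ y) = 1, (x ⊢ y) ⊥ (y⁻¹ ⊢ x⁻¹) = 1, and (y⁻¹ ⊢ x⁻¹) ⊥ (x ⊢ y) = 1. -/
theorem trigroup_inv_l {A : Type*} (T : Trigroup A) (x y : A) :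
    T.l (T.l x y) (T.l (T.inv y) (T.inv x)) = T.one ∧
    T.r (T.l (T.inv y) (T.inv x)) (T.l x y) = T.one ∧
    T.m (T.l x y) (T.l (T.inv y) (T.inv x)) = T.one ∧
    T.m (T.l (T.inv y) (T.inv x)) (T.l x y) = T.one := by
  -- m 1 x = m x 1
  have hmc : ∀ a : A, T.m T.one a = T.m a T.one := by
    intro a
    have h := T.m_assoc a (T.inv a) a
    rw [T.m_inv, T.inv_m] at h
    exact h
  -- l x 1 = m 1 x
  have hl1 : ∀ a : A, T.l a T.one = T.m T.one a := by
    intro a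
    have h := T.L2m a (T.inv a) a
    rw [T.inv_m, T.l_inv] at h
    exact h
  -- r 1 a = m 1 a
  have hr1 : ∀ a : A, T.r T.one a = T.m T.one a := by
    intro a
    have h := T.R2m a (T.inv a) a
    rw [T.m_inv, T.inv_r] at h
    rw [h, ← hmc]
  -- l a⁻¹ 1 = a⁻¹
  have hinv1 : ∀ a : A, T.l (T.inv a) T.one = T.inv a := by
    intro a
    have h := T.L1m (T.inv a) a (T.inv a)
    rw [T.l_inv, T.inv_m, T.one_l] at h
    exact h
  -- m 1 a⁻¹ = a⁻¹
  have hm1inv : ∀ a : A, T.m T.one (T.inv a) = T.inv a := by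
    intro a
    rw [← hl1, hinv1]
  -- key: l y⁻¹ x⁻¹ = m y⁻¹ x⁻¹
  have hkey : T.l (T.inv y) (T.inv x) = T.m (T.inv y) (T.inv x) := by
    have h := T.L2m (T.inv y) T.one (T.inv x)
    rw [hm1inv, hinv1] at h
    exact h
  refine ⟨?_, ?_, ?_, ?_⟩
  · rw [T.l_assoc, ← T.l_assoc y, T.l_inv, T.one_l, T.l_inv]
  · rw [T.R2, ← T.R1, ← T.r_assoc, T.inv_r, hr1, T.L2m, hinv1, T.inv_m]
  · rw [hkey, ← T.L2m, ← T.m_assoc, T.m_inv, hm1inv, T.l_inv]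
  · rw [hkey, T.m_assoc, ← T.T4, T.inv_r, ← T.m_assoc, ← hmc, hm1inv, T.inv_m]
end

section
/- In a trigroup, for all x and y: x⁻¹ ⊢ (x ⊢ y) = y and x ⊢ (x⁻¹ ⊢ y) = y. -/
theorem trigroup_l_cancel {A : Type*} (T : Trigroup A) (x y : A) :
    T.l (T.inv x) (T.l x y) = y ∧ T.l x (T.l (T.inv x) y) = y := ⟨by rw [T.L1, T.inv_r, T.one_l], by rw [T.L1m, T.m_inv, T.one_l]⟩
end

section
/- In a trigroup, for all x and y: x⁻¹ ⊥ y⁻¹ = x⁻¹ ⊢ y⁻¹, i.e., the operations ⊥ and ⊢ coincide on the set J = {x⁻¹ : x ∈ A} of inverses. -/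
lemma trigroup_inv_one {A : Type*} (T : Trigroup A) : T.inv T.one = T.one := by
  have h := T.l_inv T.one
  rwa [T.one_l] at h

lemma trigroup_l_inv_one {A : Type*} (T : Trigroup A) (x : A) :
    T.l (T.inv x) T.one = T.inv x := calc
  T.l (T.inv x) T.one = T.l (T.inv x) (T.l x (T.inv x)) := by rw [T.l_inv]
  _ = T.l (T.r (T.inv x) x) (T.inv x) := by rw [T.L1]
  _ = T.inv x := by rw [T.inv_r, T.one_l]

lemma trigroup_r_one_inv {A : Type*} (T : Trigroup A) (y : A) :
    T.r T.one (T.inv y) = T.inv y := calc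
  T.r T.one (T.inv y) = T.r (T.r (T.inv y) y) (T.inv y) := by rw [T.inv_r]
  _ = T.r (T.inv y) (T.r y (T.inv y)) := by rw [T.r_assoc]
  _ = T.r (T.inv y) (T.l y (T.inv y)) := by rw [T.R1]
  _ = T.inv y := by rw [T.l_inv, T.r_one]

lemma trigroup_m_inv_one {A : Type*} (T : Trigroup A) (x : A) :
    T.m (T.inv x) T.one = T.inv x := calc
  T.m (T.inv x) T.one = T.m (T.l (T.inv x) T.one) T.one := by rw [trigroup_l_inv_one]
  _ = T.l (T.inv x) (T.m T.one T.one) := by rw [T.L2m]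
  _ = T.inv x := by rw [trigroup_m_one_one, trigroup_l_inv_one]

theorem trigroup_m_eq_l_on_J {A : Type*} (T : Trigroup A) (x y : A) :
    T.m (T.inv x) (T.inv y) = T.l (T.inv x) (T.inv y) := calc
  T.m (T.inv x) (T.inv y) = T.m (T.inv x) (T.r T.one (T.inv y)) := by
    rw [trigroup_r_one_inv]
  _ = T.r (T.m (T.inv x) T.one) (T.inv y) := by rw [T.R2m]
  _ = T.r (T.inv x) (T.inv y) := by rw [trigroup_m_inv_one]
  _ = T.r (T.l (T.inv x) T.one) (T.inv y) := by rw [trigroup_l_inv_one]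
  _ = T.l (T.inv x) (T.r T.one (T.inv y)) := by rw [T.L2]
  _ = T.l (T.inv x) (T.inv y) := by rw [trigroup_r_one_inv]
end

section
/- In a trigroup A, the map φ : A → A defined by φ(x) = (x⁻¹)⁻¹ satisfies φ(x ⊢ y) = φ(x) ⊢ φ(y), φ(x ⊥ y) = φ(x) ⊥ φ(y), φ(x ⊣ y) = φ(x) ⊣ φ(y), and φ(1) = 1 ⊢ 1 = 1, and φ fixes every element of J = {x⁻¹ : x ∈ A}. -/
section Aux
variable {A : Type*} (T : Trigroup A)

/-- Inverses absorb `⊢ 1` on the right. -/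
lemma Trigroup.j_l_one (x : A) : T.l (T.inv x) T.one = T.inv x := by
  calc T.l (T.inv x) T.one
      = T.l (T.inv x) (T.l x (T.inv x)) := by rw [T.l_inv]
    _ = T.l (T.m (T.inv x) x) (T.inv x) := by rw [T.L1m]
    _ = T.inv x := by rw [T.inv_m, T.one_l]

/-- Inverses absorb `1 ⊣` on the left. -/
lemma Trigroup.one_r_j (x : A) : T.r T.one (T.inv x) = T.inv x := by
  calc T.r T.one (T.inv x)
      = T.r (T.r (T.inv x) x) (T.inv x) := by rw [T.inv_r]
    _ = T.r (T.inv x) (T.r x (T.inv x)) := by rw [T.r_assoc]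
    _ = T.r (T.inv x) (T.m x (T.inv x)) := by rw [T.R1m]
    _ = T.inv x := by rw [T.m_inv, T.r_one]

lemma Trigroup.one_m (x : A) : T.m T.one x = T.l x T.one := by
  have h := T.L2m x (T.inv x) x
  rw [T.inv_m, T.l_inv] at h
  exact h.symm

lemma Trigroup.m_one (x : A) : T.m x T.one = T.r T.one x := by
  have h := T.R2m x (T.inv x) x
  rw [T.m_inv, T.inv_r] at h
  exact h.symm

lemma Trigroup.phi_l (x : A) : T.inv (T.inv x) = T.l x T.one := by
  have h1 : T.m (T.inv (T.inv x)) T.one = T.inv (T.inv x) := by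
    rw [T.m_one, T.one_r_j]
  calc T.inv (T.inv x)
      = T.m (T.inv (T.inv x)) (T.m (T.inv x) x) := by rw [T.inv_m, h1]
    _ = T.m (T.m (T.inv (T.inv x)) (T.inv x)) x := by rw [T.m_assoc]
    _ = T.m T.one x := by rw [T.inv_m]
    _ = T.l x T.one := T.one_m x

lemma Trigroup.phi_r (x : A) : T.inv (T.inv x) = T.r T.one x := by
  have h1 : T.m T.one (T.inv (T.inv x)) = T.inv (T.inv x) := by
    rw [T.one_m, T.j_l_one]
  calc T.inv (T.inv x)
      = T.m (T.m x (T.inv x)) (T.inv (T.inv x)) := by rw [T.m_inv, h1]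
    _ = T.m x (T.m (T.inv x) (T.inv (T.inv x))) := by rw [T.m_assoc]
    _ = T.m x T.one := by rw [T.m_inv]
    _ = T.r T.one x := T.m_one x

lemma Trigroup.phi_m1 (x : A) : T.inv (T.inv x) = T.m T.one x := by
  rw [T.one_m]; exact T.phi_l x

lemma Trigroup.phi_m2 (x : A) : T.inv (T.inv x) = T.m x T.one := by
  rw [T.m_one]; exact T.phi_r x

/-- φ fixes inverses. -/
lemma Trigroup.phi_fix (x : A) : T.inv (T.inv (T.inv x)) = T.inv x := by
  rw [T.phi_l, T.j_l_one]

end Aux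

theorem trigroup_phi_hom {A : Type*} (T : Trigroup A) :
    let φ : A → A := fun x => T.inv (T.inv x)
    (∀ x y : A, φ (T.l x y) = T.l (φ x) (φ y)) ∧
    (∀ x y : A, φ (T.m x y) = T.m (φ x) (φ y)) ∧
    (∀ x y : A, φ (T.r x y) = T.r (φ x) (φ y)) ∧
    (φ T.one = T.l T.one T.one ∧ φ T.one = T.one) ∧
    (∀ x : A, φ (T.inv x) = T.inv x) := by
  intro φ
  refine ⟨?_, ?_, ?_, ⟨?_, ?_⟩, ?_⟩
  · intro x y
    show T.inv (T.inv (T.l x y)) = T.l (T.inv (T.inv x)) (T.inv (T.inv y))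
    rw [T.phi_l (T.l x y), T.l_assoc, ← T.phi_l y, T.phi_m2 x, ← T.L1m, T.one_l]
  · intro x y
    show T.inv (T.inv (T.m x y)) = T.m (T.inv (T.inv x)) (T.inv (T.inv y))
    calc T.inv (T.inv (T.m x y))
        = T.inv (T.inv (T.inv (T.inv (T.m x y)))) := (T.phi_fix (T.inv (T.m x y))).symm
      _ = T.m (T.inv (T.inv (T.m x y))) T.one := T.phi_m2 _
      _ = T.m (T.m T.one (T.m x y)) T.one := by rw [← T.phi_m1]
      _ = T.m (T.m (T.m T.one x) y) T.one := by rw [T.m_assoc T.one x y]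
      _ = T.m (T.m (T.inv (T.inv x)) y) T.one := by rw [← T.phi_m1]
      _ = T.m (T.inv (T.inv x)) (T.m y T.one) := T.m_assoc _ _ _
      _ = T.m (T.inv (T.inv x)) (T.inv (T.inv y)) := by rw [← T.phi_m2]
  · intro x y
    show T.inv (T.inv (T.r x y)) = T.r (T.inv (T.inv x)) (T.inv (T.inv y))
    rw [T.phi_r (T.r x y), ← T.r_assoc, ← T.phi_r x, T.phi_m1 y, ← T.R1m,
      ← T.r_assoc, T.r_one]
  · show T.inv (T.inv T.one) = T.l T.one T.one
    exact T.phi_l T.one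
  · show T.inv (T.inv T.one) = T.one
    rw [T.phi_l, T.one_l]
  · intro x
    exact T.phi_fix x
end

section
/- In a trigroup A, an element x satisfies (x⁻¹)⁻¹ = 1 if and only if x is a bar-unit, i.e., x ⊢ y = y and y ⊣ x = y for all y ∈ A. (Equivalently, the kernel of φ(x) = (x⁻¹)⁻¹ is exactly the set of bar-units.) -/
theorem trigroup_ker_phi {A : Type*} (T : Trigroup A) (x : A) :
    T.inv (T.inv x) = T.one ↔
      (∀ y : A, T.l x y = y) ∧ (∀ y : A, T.r y x = y) := by
  constructor
  · intro h
    constructor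
    · intro y
      have C : T.l (T.inv x) (T.l (T.inv (T.inv x)) y) = y := by
        rw [T.L1m, T.m_inv, T.one_l]
      have D : ∀ z, T.l x (T.l (T.inv x) z) = z := fun z => by
        rw [T.L1m, T.m_inv, T.one_l]
      calc T.l x y = T.l x (T.l (T.inv x) (T.l (T.inv (T.inv x)) y)) := by rw [C]
        _ = T.l (T.inv (T.inv x)) y := D _
        _ = y := by rw [h, T.one_l]
    · intro y
      have A1 : T.r (T.r y x) (T.inv x) = y := by
        rw [T.r_assoc, T.R1, T.l_inv, T.r_one]
      have B : ∀ z, T.r (T.r z (T.inv x)) (T.inv (T.inv x)) = z := fun z => by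
        rw [T.r_assoc, T.R1, T.l_inv, T.r_one]
      calc T.r y x = T.r (T.r (T.r y x) (T.inv x)) (T.inv (T.inv x)) := (B _).symm
        _ = T.r y (T.inv (T.inv x)) := by rw [A1]
        _ = y := by rw [h, T.r_one]
  · rintro ⟨hl, hr⟩
    have hx : T.inv x = T.one := by rw [← T.inv_r x, hr]
    rw [hx, ← T.one_l (T.inv T.one), T.l_inv]
end

section
/- In a trigroup, if e is a bar-unit (e ⊢ z = z = z ⊣ e for all z), then e⁻¹ is also a bar-unit. -/
theorem trigroup_barunit_inv {A : Type*} (T : Trigroup A) (e : A)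
    (he : ∀ z : A, T.l e z = z ∧ T.r z e = z) :
    ∀ z : A, T.l (T.inv e) z = z ∧ T.r z (T.inv e) = z := by
  intro z
  constructor
  · have h := T.L1m (T.inv e) e z
    rw [(he z).1] at h
    rw [h, T.inv_m, T.one_l]
  · have h := T.R1m z e (T.inv e)
    rw [← T.r_assoc, (he z).2] at h
    rw [h, T.m_inv, T.r_one]
end

section
/- In a trigroup, define [x, y, z] = (x ⊥ y) ⊢ z ⊣ (y⁻¹ ⊥ x⁻¹). Then [x, y, 1] = 1 for all x, y, and if e₁, e₂ are bar-units then [e₁, e₂, z] = z for all z. -/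
def Trigroup.bracket {A : Type*} (T : Trigroup A) (x y z : A) : A :=
  T.r (T.l (T.m x y) z) (T.m (T.inv y) (T.inv x))

lemma Trigroup.l_one_eq {A : Type*} (T : Trigroup A) (y : A) :
    T.l y T.one = T.r T.one y := by
  conv_lhs => rw [← T.inv_r y, ← T.R2, T.l_inv]

lemma Trigroup.key {A : Type*} (T : Trigroup A) (y : A) :
    T.r (T.l y T.one) (T.inv y) = T.one := by
  rw [T.l_one_eq, T.r_assoc, T.R1, T.l_inv, T.r_one]

theorem trigroup_bracket_units {A : Type*} (T : Trigroup A) :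
    (∀ x y : A, T.bracket x y T.one = T.one) ∧
    (∀ e₁ e₂ : A, (∀ z : A, T.l e₁ z = z ∧ T.r z e₁ = z) →
      (∀ z : A, T.l e₂ z = z ∧ T.r z e₂ = z) →
      ∀ z : A, T.bracket e₁ e₂ z = z) := by
  constructor
  · intro x y
    unfold Trigroup.bracket
    rw [← T.R1m, ← T.r_assoc, ← T.L1m, T.R2, T.key, T.key]
  · intro e₁ e₂ h₁ h₂ z
    have hinv₁ : T.inv e₁ = T.one := by rw [← T.l_inv e₁, (h₁ (T.inv e₁)).1]
    have hinv₂ : T.inv e₂ = T.one := by rw [← T.l_inv e₂, (h₂ (T.inv e₂)).1]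
    unfold Trigroup.bracket
    rw [hinv₁, hinv₂, ← T.L1m, (h₁ (T.l e₂ z)).1, (h₂ z).1, ← T.R1m, T.r_one, T.r_one]
end

section
/- In a trigroup, with θ = x₁ ⊥ x₂ and [x, y, z] = (x ⊥ y) ⊢ z ⊣ (y⁻¹ ⊥ x⁻¹): θ ⊢ z = [x₁, x₂, z] ⊣ θ and θ ⊢ (y₁ ⊥ y₂) = [x₁, x₂, y₁] ⊥ (θ ⊢ y₂) for all y₁, y₂, z. -/
/-- `a ⊣ ((x₂⁻¹ ⊥ x₁⁻¹) ⊣ (x₁ ⊥ x₂)) = a`. -/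
lemma trigroup_r_unit {A : Type*} (T : Trigroup A) (x₁ x₂ a : A) :
    T.r a (T.r (T.m (T.inv x₂) (T.inv x₁)) (T.m x₁ x₂)) = a := by
  rw [← T.r_assoc, ← T.R1m a (T.inv x₂) (T.inv x₁), ← T.R1m _ x₁ x₂,
    ← T.r_assoc _ x₁ x₂, ← T.r_assoc a (T.inv x₂) (T.inv x₁),
    T.r_assoc (T.r a (T.inv x₂)) (T.inv x₁) x₁, T.inv_r, T.r_one,
    T.r_assoc a (T.inv x₂) x₂, T.inv_r, T.r_one]

/-- `((x₂⁻¹ ⊥ x₁⁻¹) ⊣ (x₁ ⊥ x₂)) ⊢ b = b`. -/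
lemma trigroup_l_unit {A : Type*} (T : Trigroup A) (x₁ x₂ b : A) :
    T.l (T.r (T.m (T.inv x₂) (T.inv x₁)) (T.m x₁ x₂)) b = b := by
  rw [← T.L1, ← T.L1m x₁ x₂ b, ← T.L1m (T.inv x₂) (T.inv x₁),
    T.L1 (T.inv x₁), T.inv_r, T.one_l, T.L1, T.inv_r, T.one_l]

theorem trigroup_theta_lemma {A : Type*} (T : Trigroup A) (x₁ x₂ : A) :
    let θ := T.m x₁ x₂
    (∀ z : A, T.l θ z = T.r (T.bracket x₁ x₂ z) θ) ∧
    (∀ y₁ y₂ : A, T.l θ (T.m y₁ y₂) = T.m (T.bracket x₁ x₂ y₁) (T.l θ y₂)) := by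
  intro θ
  constructor
  · intro z
    rw [Trigroup.bracket, T.r_assoc, trigroup_r_unit]
  · intro y₁ y₂
    rw [Trigroup.bracket, T.T4, T.L1, trigroup_l_unit, ← T.L2m]
end

section
/- In a trigroup with [x, y, z] = (x ⊥ y) ⊢ z ⊣ (y⁻¹ ⊥ x⁻¹), the self-distributivity (3-rack) identity holds: [x₁, x₂, [y₁, y₂, z]] = [[x₁,x₂,y₁], [x₁,x₂,y₂], [x₁,x₂,z]] for all x₁, x₂, y₁, y₂, z. -/
namespace TrigroupAux

variable {A : Type*} (T : Trigroup A)

/-- right r-action by `a` then `inv a` cancels -/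
lemma rc1 (V a : A) : T.r (T.r V a) (T.inv a) = V := by
  rw [T.r_assoc, T.R1, T.l_inv, T.r_one]

/-- right r-action by `inv a` then `a` cancels -/
lemma rc2 (V a : A) : T.r (T.r V (T.inv a)) a = V := by
  rw [T.r_assoc, T.inv_r, T.r_one]

/-- right r-action by `m a b` splits -/
lemma rho_m (V a b : A) : T.r V (T.m a b) = T.r (T.r V a) b := by
  rw [← T.R1m, ← T.r_assoc]

lemma m_one (b : A) : T.m T.one b = T.l b T.one := by
  calc T.m T.one b = T.m (T.l b (T.inv b)) b := by rw [T.l_inv]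
    _ = T.l b (T.m (T.inv b) b) := (T.L2m b (T.inv b) b).symm
    _ = T.l b T.one := by rw [T.inv_m]

lemma minv (a b : A) :
    T.m (T.m (T.inv b) (T.inv a)) (T.m a b) = T.one := by
  rw [T.m_assoc, ← T.m_assoc (T.inv a), T.inv_m, m_one, ← T.T4, T.inv_r,
    m_one, T.one_l]

/-- right r-action by a bracket, expanded -/
lemma rho_bracket (V a b c : A) :
    T.r V (T.bracket a b c)
      = T.r (T.r (T.r (T.r (T.r V a) b) c) (T.inv b)) (T.inv a) := by
  unfold Trigroup.bracket
  rw [← T.r_assoc, rho_m, ← T.R1, ← T.r_assoc, rho_m]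

/-- m of two brackets with the same x₁ x₂ -/
lemma mXY (x₁ x₂ u v : A) :
    T.m (T.bracket x₁ x₂ u) (T.bracket x₁ x₂ v)
      = T.r (T.l (T.m x₁ x₂) (T.m u v)) (T.m (T.inv x₂) (T.inv x₁)) := by
  unfold Trigroup.bracket
  rw [T.T4, T.L2, T.L1m (T.m (T.inv x₂) (T.inv x₁)), minv, T.one_l,
    ← T.R2m, ← T.L2m]

/-- l of (m X Y) on bracket Z -/
lemma comp2 (x₁ x₂ y₁ y₂ z : A) :
    T.l (T.r (T.l (T.m x₁ x₂) (T.m y₁ y₂)) (T.m (T.inv x₂) (T.inv x₁)))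
        (T.bracket x₁ x₂ z)
      = T.r (T.l (T.m (T.m x₁ x₂) (T.m y₁ y₂)) z)
          (T.m (T.inv x₂) (T.inv x₁)) := by
  unfold Trigroup.bracket
  rw [← T.L1, T.L2 (T.m (T.inv x₂) (T.inv x₁)),
    T.L1m (T.m (T.inv x₂) (T.inv x₁)), minv, T.one_l, T.L2,
    T.l_assoc, T.L1m]

end TrigroupAux

open TrigroupAux in
theorem trigroup_self_distrib {A : Type*} (T : Trigroup A)
    (x₁ x₂ y₁ y₂ z : A) :
    T.bracket x₁ x₂ (T.bracket y₁ y₂ z) =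
      T.bracket (T.bracket x₁ x₂ y₁) (T.bracket x₁ x₂ y₂) (T.bracket x₁ x₂ z) := by
  have hL : T.bracket x₁ x₂ (T.bracket y₁ y₂ z)
      = T.r (T.r (T.r (T.r (T.l (T.m (T.m x₁ x₂) (T.m y₁ y₂)) z)
          (T.inv y₂)) (T.inv y₁)) (T.inv x₂)) (T.inv x₁) := by
    show T.r (T.l (T.m x₁ x₂)
        (T.r (T.l (T.m y₁ y₂) z) (T.m (T.inv y₂) (T.inv y₁))))
        (T.m (T.inv x₂) (T.inv x₁)) = _
    rw [T.L2, T.L1m, rho_m, rho_m]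
  have hK : T.r (T.l (T.m (T.m x₁ x₂) (T.m y₁ y₂)) z)
        (T.m (T.inv x₂) (T.inv x₁))
      = T.r (T.r (T.r (T.r (T.r (T.r (T.l (T.m (T.m x₁ x₂) (T.m y₁ y₂)) z)
          (T.inv y₂)) (T.inv y₁)) (T.inv x₂)) (T.inv x₁))
          (T.bracket x₁ x₂ y₁)) (T.bracket x₁ x₂ y₂) := by
    rw [rho_bracket, rho_bracket]
    simp only [rc2]
    rw [← rho_m]
  rw [hL]
  symm
  show T.r (T.l (T.m (T.bracket x₁ x₂ y₁) (T.bracket x₁ x₂ y₂))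
      (T.bracket x₁ x₂ z))
      (T.m (T.inv (T.bracket x₁ x₂ y₂)) (T.inv (T.bracket x₁ x₂ y₁))) = _
  rw [mXY, comp2, rho_m, hK, rc1, rc1]
end

section
/- In a trigroup with [x, y, z] = (x ⊥ y) ⊢ z ⊣ (y⁻¹ ⊥ x⁻¹), for all x, y, b there exists a unique z with [x, y, z] = b; explicitly z = ((x ⊥ y)⁻¹ ⊢ b) ⊣ (x ⊥ y). Hence (A, [-,-,-], 1) is a pointed 3-rack. -/
namespace TrigroupAux

variable {A : Type*} (T : Trigroup A)

lemma inv_one : T.inv T.one = T.one := by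
  have h := T.l_inv T.one
  rwa [T.one_l] at h

lemma l_cancel' (t u : A) : T.l (T.inv t) (T.l t u) = u := by
  rw [T.L1m, T.inv_m, T.one_l]

lemma l_cancel (t u : A) : T.l t (T.l (T.inv t) u) = u := by
  rw [T.L1m, T.m_inv, T.one_l]

lemma r_cancel' (u t : A) : T.r (T.r u (T.inv t)) t = u := by
  rw [T.r_assoc, T.inv_r, T.r_one]

lemma one_r_inv (y : A) : T.r T.one (T.inv y) = T.inv y := by
  conv_lhs => rw [← T.inv_r y]
  rw [T.r_assoc, T.R1, T.l_inv, T.r_one]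

lemma key1 (p q w : A) :
    T.l (T.m (T.m (T.inv q) (T.inv p)) (T.m p q)) w = w := by
  rw [← T.L1m, ← T.L1m, ← T.L1m, l_cancel', l_cancel']

lemma key2 (p q w : A) :
    T.r (T.r w (T.m (T.inv q) (T.inv p))) (T.m p q) = w := by
  rw [T.r_assoc, T.R1m, T.m_assoc, ← T.m_assoc (T.inv p), T.inv_m,
    ← T.R1m, ← T.r_assoc, ← T.R1m, T.R1, T.one_l]
  exact r_cancel' T w q

lemma key2' (p q w : A) :
    T.r (T.r w (T.m p q)) (T.m (T.inv q) (T.inv p)) = w := by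
  rw [T.r_assoc, T.R1m, T.m_assoc, ← T.m_assoc q, T.m_inv,
    ← T.R1m, ← T.r_assoc, ← T.R1m, T.R1, T.one_l]
  rw [T.r_assoc, T.R1, T.l_inv, T.r_one]

lemma a1c (x y : A) :
    T.r (T.l (T.m x y) T.one) (T.m (T.inv y) (T.inv x)) = T.one := by
  rw [← T.R1m, ← T.r_assoc, T.R2, one_r_inv, ← T.L1m, T.l_inv,
    T.R2, one_r_inv, T.l_inv]

lemma inv_replace (u w : A) (h : T.m u w = T.one) (z : A) :
    T.r z (T.inv u) = T.r z w := by
  have h1 : T.m (T.inv u) T.one = T.m T.one w := by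
    calc T.m (T.inv u) T.one = T.m (T.inv u) (T.m u w) := by rw [h]
      _ = T.m (T.m (T.inv u) u) w := (T.m_assoc _ _ _).symm
      _ = T.m T.one w := by rw [T.inv_m]
  calc T.r z (T.inv u) = T.r z (T.r (T.inv u) T.one) := by rw [T.r_one]
    _ = T.r z (T.m (T.inv u) T.one) := T.R1m z _ _
    _ = T.r z (T.m T.one w) := by rw [h1]
    _ = T.r z (T.r T.one w) := (T.R1m z _ _).symm
    _ = T.r z (T.l T.one w) := T.R1 z _ _
    _ = T.r z w := by rw [T.one_l]

lemma phi_inv (x y t : A) :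
    T.m (T.r (T.l (T.m x y) t) (T.m (T.inv y) (T.inv x)))
      (T.r (T.l (T.m x y) (T.inv t)) (T.m (T.inv y) (T.inv x))) = T.one := by
  rw [T.T4, T.L2, T.L1m, key1, ← T.R2m, ← T.L2m, T.m_inv]
  exact a1c T x y

lemma cross (x₁ x₂ w s : A) :
    T.m (T.r (T.l (T.m x₁ x₂) w) (T.m (T.inv x₂) (T.inv x₁)))
      (T.r (T.l (T.m x₁ x₂) s) (T.m (T.inv x₂) (T.inv x₁))) =
    T.m (T.l (T.m x₁ x₂) w) (T.r s (T.m (T.inv x₂) (T.inv x₁))) := by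
  rw [T.T4, T.L2, T.L1m, key1]

lemma lcz (x₁ x₂ w : A) :
    T.l (T.m (T.inv x₂) (T.inv x₁))
      (T.r (T.l (T.m x₁ x₂) w) (T.m (T.inv x₂) (T.inv x₁))) =
    T.r w (T.m (T.inv x₂) (T.inv x₁)) := by
  rw [T.L2, T.L1m, key1]

lemma r_m (w p q : A) : T.r w (T.m p q) = T.r (T.r w p) q := by
  rw [← T.R1m]
  exact (T.r_assoc w p q).symm

lemma r_l (w p q : A) : T.r w (T.l p q) = T.r (T.r w p) q := by
  rw [← T.R1]
  exact (T.r_assoc w p q).symm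

end TrigroupAux

open TrigroupAux in
theorem trigroup_pointed_3rack {A : Type*} (T : Trigroup A) :
    (∀ x y b : A,
      (T.bracket x y (T.r (T.l (T.inv (T.m x y)) b) (T.m x y)) = b) ∧
      (∃! z : A, T.bracket x y z = b)) ∧
    (∀ x₁ x₂ y₁ y₂ z : A, T.bracket x₁ x₂ (T.bracket y₁ y₂ z) =
      T.bracket (T.bracket x₁ x₂ y₁) (T.bracket x₁ x₂ y₂) (T.bracket x₁ x₂ z)) ∧
    (∀ z : A, T.bracket T.one T.one z = z) ∧
    (∀ x₁ x₂ : A, T.bracket x₁ x₂ T.one = T.one) := by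
  refine ⟨fun x y b => ?_, fun x₁ x₂ y₁ y₂ z => ?_, fun z => ?_, fun x₁ x₂ => ?_⟩
  · have hex : T.bracket x y (T.r (T.l (T.inv (T.m x y)) b) (T.m x y)) = b := by
      simp only [Trigroup.bracket]
      rw [T.L2 (T.m x y) (T.l (T.inv (T.m x y)) b) (T.m x y),
        l_cancel T (T.m x y) b]
      exact key2' T x y b
    have hinj : ∀ w : A,
        T.r (T.l (T.inv (T.m x y)) (T.bracket x y w)) (T.m x y) = w := by
      intro w
      simp only [Trigroup.bracket]
      rw [T.L2 (T.inv (T.m x y)) (T.l (T.m x y) w) (T.m (T.inv y) (T.inv x)),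
        l_cancel' T (T.m x y) w]
      exact key2 T x y w
    exact ⟨hex, ⟨_, hex, fun w hw => by rw [← hinj w, hw]⟩⟩
  · simp only [Trigroup.bracket]
    set a := T.m x₁ x₂ with ha
    set c := T.m (T.inv x₂) (T.inv x₁) with hc
    set e := T.m y₁ y₂ with he
    set U := T.r (T.l a y₁) c with hU
    set V := T.r (T.l a y₂) c with hV
    set Z := T.r (T.l a z) c with hZ
    rw [r_m T (T.l (T.m U V) Z) (T.inv V) (T.inv U)]
    have hV' : T.m V (T.r (T.l a (T.inv y₂)) c) = T.one := by
      rw [hV, ha, hc]; exact phi_inv T x₁ x₂ y₂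
    have hU' : T.m U (T.r (T.l a (T.inv y₁)) c) = T.one := by
      rw [hU, ha, hc]; exact phi_inv T x₁ x₂ y₁
    rw [inv_replace T V _ hV', inv_replace T U _ hU']
    have hcross : T.m U V = T.m (T.l a y₁) (T.r y₂ c) := by
      rw [hU, hV, ha, hc]; exact cross T x₁ x₂ y₁ y₂
    rw [hcross]
    rw [← T.L1m (T.l a y₁) (T.r y₂ c) Z]
    rw [← T.L1 y₂ c Z]
    have hlcZ : T.l c Z = T.r z c := by
      rw [hZ, ha, hc]; exact lcz T x₁ x₂ z
    rw [hlcZ]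
    rw [T.l_assoc a y₁ (T.l y₂ (T.r z c))]
    rw [T.L1m y₁ y₂ (T.r z c)]
    rw [T.L2 (T.m y₁ y₂) z c]
    rw [← T.r_assoc (T.l a (T.r (T.l (T.m y₁ y₂) z) c)) (T.l a (T.inv y₂)) c]
    rw [r_l T (T.l a (T.r (T.l (T.m y₁ y₂) z) c)) a (T.inv y₂)]
    rw [T.L2 a (T.l (T.m y₁ y₂) z) c]
    have hkey2 : T.r (T.r (T.l a (T.l (T.m y₁ y₂) z)) c) a
        = T.l a (T.l (T.m y₁ y₂) z) := by
      rw [ha, hc]; exact key2 T x₁ x₂ _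
    rw [hkey2]
    rw [← T.r_assoc (T.r (T.r (T.l a (T.l (T.m y₁ y₂) z)) (T.inv y₂)) c)
      (T.l a (T.inv y₁)) c]
    rw [r_l T (T.r (T.r (T.l a (T.l (T.m y₁ y₂) z)) (T.inv y₂)) c) a (T.inv y₁)]
    have hkey2b : T.r (T.r (T.r (T.l a (T.l (T.m y₁ y₂) z)) (T.inv y₂)) c) a
        = T.r (T.l a (T.l (T.m y₁ y₂) z)) (T.inv y₂) := by
      rw [ha, hc]; exact key2 T x₁ x₂ _
    rw [hkey2b]
    rw [T.R2 a (T.l (T.m y₁ y₂) z) (T.inv y₂)]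
    rw [T.R2 a (T.r (T.l (T.m y₁ y₂) z) (T.inv y₂)) (T.inv y₁)]
    rw [r_m T (T.l e z) (T.inv y₂) (T.inv y₁), he]
  · simp only [Trigroup.bracket, TrigroupAux.inv_one]
    rw [← T.L1m, T.one_l, T.one_l, ← T.R1m, T.R1, T.one_l, T.r_one]
  · exact a1c T x₁ x₂
end
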